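/- Let k₀ be a field of characteristic p > 0, k = k₀(t), a, b ∈ k₀ nonzero, and m, n ≥ 1 integers with p^m > 2. If x, y ∈ k satisfy x = a·x^{p^m} + b·t·y^{p^n}, then y = 0 and x ∈ k₀ with x = a·x^{p^m}. In particular, the set of solutions (x, y) ∈ k² of this equation is finite. -/

import Mathlib

/-!
Write `q = p ^ m`, `r = p ^ n` and `x = f / g` in lowest terms. Since `q` and `r` vanish in `k₀`,
the polynomial derivative kills `q`-th and `r`-th powers, so differentiating the equation gives
`x' = b y ^ r`, i.e. `x = a x ^ q + t x'`. Clearing denominators turns this into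
`a f ^ q = g ^ (q - 2) (f g - t (f' g - f g'))`; as `q ≥ 3` and `f, g` are coprime, `g` is a unit,
and then comparing degrees in `a f ^ q = f - t f'` forces `f` to be constant. Hence `x' = 0`,
so `y = 0`.
-/

open Polynomial

namespace Polynomial

section CommRing

variable {R : Type*} [CommRing R]

theorem derivative_pow_of_natCast_eq_zero {n : ℕ} (hn : (n : R) = 0) (w : R[X]) :
    derivative (w ^ n) = 0 := by
  rw [derivative_pow, hn, C_0, zero_mul, zero_mul]

theorem derivative_mul_sub_mul_derivative_of_eq {s : ℕ} (hs : ((s + 2 : ℕ) : R) = 0)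
    {a b : R} {f g U V : R[X]} (hU : derivative U = 0) (hV : derivative V = 0)
    (h : f * g ^ (s + 1) * V = C a * f ^ (s + 2) * V + C b * X * U * g ^ (s + 2)) :
    (derivative f * g - f * derivative g) * g ^ s * V = C b * U * g ^ (s + 2) := by
  have hs' : ((s + 1 : ℕ) : R) = -1 := by push_cast at hs ⊢; linear_combination hs
  have hg : derivative (g ^ (s + 1)) = -(g ^ s * derivative g) := by
    rw [derivative_pow, hs', Nat.add_sub_cancel, map_neg, C_1]
    ring
  have h' := congrArg derivative h
  simp only [derivative_mul, derivative_add, hg, hU, hV, derivative_pow_of_natCast_eq_zero hs,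
    derivative_C, derivative_X, mul_zero, zero_mul, add_zero, zero_add, mul_one] at h'
  linear_combination h'

end CommRing

section Field

variable {K : Type*} [Field K]

theorem natDegree_eq_zero_of_C_mul_pow_eq_sub_X_mul_derivative {a : K} (ha : a ≠ 0) {q : ℕ}
    (hq : 2 ≤ q) {f : K[X]} (h : C a * f ^ q = f - X * derivative f) : f.natDegree = 0 := by
  by_contra hf
  have hle : (f - X * derivative f).natDegree ≤ f.natDegree := by
    refine (natDegree_sub_le _ _).trans (max_le le_rfl ?_)
    refine natDegree_mul_le.trans ?_
    have := natDegree_derivative_le f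
    rw [natDegree_X]
    omega
  rw [← h, natDegree_C_mul ha, natDegree_pow] at hle
  have := Nat.pos_of_ne_zero hf
  nlinarith

theorem Monic.eq_one_of_dvd_C_mul_pow {f g : K[X]} (hg : g.Monic) (hfg : IsCoprime f g) {a : K}
    (ha : a ≠ 0) {n : ℕ} (hdvd : g ∣ C a * f ^ n) : g = 1 :=
  hg.eq_one_of_isUnit <| isUnit_of_dvd_unit
    ((hfg.pow_left (m := n)).symm.dvd_of_dvd_mul_right hdvd) (isUnit_C.mpr ha.isUnit)

end Field

end Polynomial

theorem finite_setOf_eq_mul_pow {F : Type*} [CommRing F] [IsDomain F] {a : F} (ha : a ≠ 0)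
    {q : ℕ} (hq : q ≠ 1) : {z : F | z = a * z ^ q}.Finite := by
  have hP : C a * X ^ q - X ≠ 0 := by
    intro h
    have := congrArg (coeff · q) h
    simp [coeff_X, hq.symm, ha] at this
  refine (finite_setOfPred_isRoot hP).subset fun z (hz : z = a * z ^ q) => ?_
  simp [← hz]

namespace RatFunc

variable {K : Type*} [Field K]

theorem algebraMap_num_eq_mul_algebraMap_denom (x : RatFunc K) :
    algebraMap K[X] (RatFunc K) x.num = x * algebraMap K[X] (RatFunc K) x.denom :=
  (div_eq_iff (algebraMap_ne_zero x.denom_ne_zero)).mp x.num_div_denom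

theorem eq_zero_and_exists_eq_C_of_eq_C_mul_pow_add {q r : ℕ} (hq : (q : K) = 0)
    (hr : (r : K) = 0) (hq3 : 3 ≤ q) (hr0 : r ≠ 0) {a b : K} (ha : a ≠ 0) (hb : b ≠ 0)
    {x y : RatFunc K} (h : x = RatFunc.C a * x ^ q + RatFunc.C b * RatFunc.X * y ^ r) :
    y = 0 ∧ ∃ c : K, x = RatFunc.C c := by
  obtain ⟨s, rfl⟩ : ∃ s, q = s + 1 + 2 := ⟨q - 3, by omega⟩
  set f := x.num
  set g := x.denom
  have hx : algebraMap K[X] (RatFunc K) f = x * algebraMap K[X] (RatFunc K) g :=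
    x.algebraMap_num_eq_mul_algebraMap_denom
  have cleared : f * g ^ (s + 1 + 1) * y.denom ^ r
      = Polynomial.C a * f ^ (s + 1 + 2) * y.denom ^ r
        + Polynomial.C b * Polynomial.X * y.num ^ r * g ^ (s + 1 + 2) := by
    apply algebraMap_injective K
    simp only [map_mul, map_add, map_pow, algebraMap_C, algebraMap_X, hx,
      algebraMap_num_eq_mul_algebraMap_denom]
    linear_combination (algebraMap K[X] (RatFunc K) g ^ (s + 1 + 2)
      * algebraMap K[X] (RatFunc K) y.denom ^ r) * h
  have differentiated := derivative_mul_sub_mul_derivative_of_eq hq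
    (derivative_pow_of_natCast_eq_zero hr _) (derivative_pow_of_natCast_eq_zero hr _) cleared
  have key : Polynomial.C a * f ^ (s + 1 + 2)
      = g ^ (s + 1) * (f * g - Polynomial.X * (derivative f * g - f * derivative g)) :=
    mul_right_cancel₀ (pow_ne_zero r y.denom_ne_zero)
      (by linear_combination Polynomial.X * differentiated - cleared)
  have hg : g = 1 := x.monic_denom.eq_one_of_dvd_C_mul_pow x.isCoprime_num_denom ha
    (key ▸ (dvd_pow_self g s.succ_ne_zero).mul_right _)
  obtain ⟨c, hc⟩ := natDegree_eq_zero.mp <|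
    natDegree_eq_zero_of_C_mul_pow_eq_sub_X_mul_derivative ha (q := s + 1 + 2) (by omega)
      (by rw [key, hg]; simp)
  have hu : y.num ^ r = 0 := by
    simpa [hg, ← hc, hb] using differentiated.symm
  refine ⟨num_eq_zero_iff.mp (pow_eq_zero_iff hr0 |>.mp hu), c, ?_⟩
  simpa [hg, ← hc] using hx.symm

end RatFunc

theorem unipotent_curve_finite_rational_points_general
    (p : ℕ) (k₀ : Type) [Field k₀] [CharP k₀ p]
    (a b : k₀) (ha : a ≠ 0) (hb : b ≠ 0)
    (m n : ℕ) (hn : 1 ≤ n) (hpm : 2 < p ^ m) :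
    (∀ x y : RatFunc k₀,
      x = RatFunc.C a * x ^ p ^ m + RatFunc.C b * RatFunc.X * y ^ p ^ n →
      y = 0 ∧ (∃ c : k₀, x = RatFunc.C c) ∧ x = RatFunc.C a * x ^ p ^ m) ∧
    {s : RatFunc k₀ × RatFunc k₀ |
      s.1 = RatFunc.C a * s.1 ^ p ^ m + RatFunc.C b * RatFunc.X * s.2 ^ p ^ n}.Finite := by
  have hm : m ≠ 0 := by rintro rfl; simp at hpm
  have hp : p ≠ 0 := by rintro rfl; simp [zero_pow hm] at hpm
  have hq : ((p ^ m : ℕ) : k₀) = 0 := by rw [Nat.cast_pow, CharP.cast_eq_zero, zero_pow hm]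
  have hr : ((p ^ n : ℕ) : k₀) = 0 := by
    rw [Nat.cast_pow, CharP.cast_eq_zero, zero_pow (by omega)]
  have solutions : ∀ x y : RatFunc k₀,
      x = RatFunc.C a * x ^ p ^ m + RatFunc.C b * RatFunc.X * y ^ p ^ n →
      y = 0 ∧ (∃ c : k₀, x = RatFunc.C c) ∧ x = RatFunc.C a * x ^ p ^ m := by
    intro x y h
    obtain ⟨hy, hx⟩ := RatFunc.eq_zero_and_exists_eq_C_of_eq_C_mul_pow_add hq hr hpm
      (pow_ne_zero n hp) ha hb h
    exact ⟨hy, hx, by simpa [hy, hp] using h⟩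
  refine ⟨solutions, ?_⟩
  have hCa : RatFunc.C a ≠ 0 := (_root_.map_ne_zero RatFunc.C).mpr ha
  refine ((finite_setOf_eq_mul_pow hCa (q := p ^ m) (by omega)).image fun z => (z, 0)).subset ?_
  rintro ⟨x, y⟩ h
  obtain ⟨hy, -, hx⟩ := solutions x y h
  exact ⟨x, hx, by rw [hy]⟩

/-- **Gabber-type example.**
Let `k₀` be a field of characteristic `p > 0`, `k = k₀(t)`, `a b ∈ k₀` nonzero, and
`m n ≥ 1` with `p ^ m > 2`.  If `x y ∈ k` satisfy `x = a * x ^ p ^ m + b * t * y ^ p ^ n`,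
then `y = 0` and `x` is a constant in `k₀` satisfying `x = a * x ^ p ^ m`.
In particular the set of solutions `(x, y) ∈ k²` of this equation is finite. -/
theorem unipotent_curve_finite_rational_points
    (p : ℕ) (k₀ : Type) [Field k₀] [CharP k₀ p] (hp : 0 < p)
    (a b : k₀) (ha : a ≠ 0) (hb : b ≠ 0)
    (m n : ℕ) (hm : 1 ≤ m) (hn : 1 ≤ n) (hpm : 2 < p ^ m) :
    (∀ x y : RatFunc k₀,
      x = RatFunc.C a * x ^ p ^ m + RatFunc.C b * RatFunc.X * y ^ p ^ n →
      y = 0 ∧ (∃ c : k₀, x = RatFunc.C c) ∧ x = RatFunc.C a * x ^ p ^ m) ∧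
    {s : RatFunc k₀ × RatFunc k₀ |
      s.1 = RatFunc.C a * s.1 ^ p ^ m + RatFunc.C b * RatFunc.X * s.2 ^ p ^ n}.Finite :=
  unipotent_curve_finite_rational_points_general p k₀ a b ha hb m n hn hpm
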